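/- For every l-valued finite automaton with ε-moves A, there exists an l-valued finite automaton B (without ε-moves) such that rec_A = rec_B. -/

import Mathlib

/-- A complete orthomodular lattice. -/
class OrthomodularCompleteLattice (α : Type*) extends CompleteLattice α, Compl α where
  inf_compl_self : ∀ a : α, a ⊓ aᶜ = ⊥
  sup_compl_self : ∀ a : α, a ⊔ aᶜ = ⊤
  compl_compl' : ∀ a : α, aᶜᶜ = a
  compl_antitone : ∀ a b : α, a ≤ b → bᶜ ≤ aᶜ
  orthomodular : ∀ a b : α, a ≤ b → b = a ⊔ (aᶜ ⊓ b)

/-- An `l`-valued finite automaton (`l`-VFA). -/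
structure LVFA (Q A l : Type*) where
  δ : Q → A → Q → l
  init : Q → l
  final : Q → l

/-- The `l`-valued language recognized by an `l`-VFA. -/
def lvfaLang {Q A l : Type*} [OrthomodularCompleteLattice l] (M : LVFA Q A l)
    (w : List A) : l :=
  ⨆ path : Fin (w.length + 1) → Q,
    M.init (path 0) ⊓
      (⨅ i : Fin w.length, M.δ (path i.castSucc) (w.get i) (path i.succ)) ⊓
      M.final (path (Fin.last w.length))

/-- An `l`-valued deterministic finite automaton (`l`-VDFA). -/
structure LVDFA (Q A l : Type*) where
  next : Q → A → Q
  start : Q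
  final : Q → l

/-- The `l`-valued language recognized by an `l`-VDFA. -/
def lvdfaLang {Q A l : Type*} (M : LVDFA Q A l) (w : List A) : l :=
  M.final (w.foldl M.next M.start)

/-- An `l`-valued finite automaton with ε-moves (`ε` is encoded as `none`). -/
structure LVFAe (Q A l : Type*) where
  δ : Q → Option A → Q → l
  init : Q → l
  final : Q → l

/-- The `l`-valued language recognized by an `l`-VFA with ε-moves. -/
def lvfaeLang {Q A l : Type*} [OrthomodularCompleteLattice l] (M : LVFAe Q A l)
    (w : List A) : l :=
  ⨆ n : ℕ, ⨆ τ : Fin n → Option A, ⨆ _ : (List.ofFn τ).reduceOption = w,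
    ⨆ path : Fin (n + 1) → Q,
      M.init (path 0) ⊓
        (⨅ i : Fin n, M.δ (path i.castSucc) (τ i) (path i.succ)) ⊓
        M.final (path (Fin.last n))

/-- An `l`-valued language is `l`-regular if it is recognized by some `l`-VFA. -/
def IsLRegular {A l : Type*} [OrthomodularCompleteLattice l] (f : List A → l) : Prop :=
  ∃ (Q : Type) (_ : Fintype Q) (M : LVFA Q A l), ∀ w, lvfaLang M w = f w

/-!
Since `l` is only orthomodular, `⊓` does not distribute over `⨆`, so the classical ε-closure
construction, which takes joins over ε-paths inside a transition, is unavailable. Instead the states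
of the ε-free automaton are the simple ε-paths of `M` (finitely many, as they repeat no state): a
letter transition enters such a path at its start and traverses it, so every run of the new
automaton expands to a run of `M` with the same label and weight. Conversely, cutting the cycles out
of the ε-segments of a run of `M` only drops meetands, so every run of `M` is dominated by a run of
the new automaton. Both languages are joins of run weights, hence they coincide.
-/

section Paths

variable {Q β l : Type*}

@[simp]
def pathEnd : Q → List (β × Q) → Q
  | q, [] => q
  | _, (_, q) :: steps => pathEnd q steps

theorem pathEnd_append (q : Q) (xs ys : List (β × Q)) :
    pathEnd q (xs ++ ys) = pathEnd (pathEnd q xs) ys := by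
  induction xs generalizing q with
  | nil => rfl
  | cons x xs ih => exact ih x.2

theorem pathEnd_map_prodMk (b : β) (q : Q) (r : List Q) :
    pathEnd q (r.map (Prod.mk b)) = r.getLastD q := by
  induction r generalizing q with
  | nil => rfl
  | cons p r ih => exact (ih p).trans List.getLastD_cons.symm

theorem pathEnd_ofFn {n : ℕ} (τ : Fin n → β) (path : Fin (n + 1) → Q) :
    pathEnd (path 0) (List.ofFn fun i => (τ i, path i.succ)) = path (Fin.last n) := by
  induction n with
  | zero => simp
  | succ n ih => simpa using ih (τ ∘ Fin.succ) (path ∘ Fin.succ)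

section SemilatticeInf

variable [SemilatticeInf l] [OrderTop l] (d : Q → β → Q → l)

@[simp]
def pathWeight : Q → List (β × Q) → l
  | _, [] => ⊤
  | q, (b, q') :: steps => d q b q' ⊓ pathWeight q' steps

theorem pathWeight_append (q : Q) (xs ys : List (β × Q)) :
    pathWeight d q (xs ++ ys) = pathWeight d q xs ⊓ pathWeight d (pathEnd q xs) ys := by
  induction xs generalizing q with
  | nil => simp
  | cons x xs ih => simp [ih, inf_assoc]

end SemilatticeInf

section CompleteLattice

variable [CompleteLattice l] (d : Q → β → Q → l)

theorem pathWeight_ofFn {n : ℕ} (τ : Fin n → β) (path : Fin (n + 1) → Q) :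
    pathWeight d (path 0) (List.ofFn fun i => (τ i, path i.succ)) =
      ⨅ i, d (path i.castSucc) (τ i) (path i.succ) := by
  induction n with
  | zero => exact (iInf_of_empty _).symm
  | succ n ih =>
    have ih' := ih (τ ∘ Fin.succ) (path ∘ Fin.succ)
    simp only [Function.comp_apply, Fin.succ_zero_eq_one] at ih'
    rw [List.ofFn_succ, ← (finSuccEquiv n).symm.iInf_comp, iInf_option]
    simp [ih']

end CompleteLattice

end Paths

section Runs

variable {Q β l : Type*} [CompleteLattice l]

def runWeight (init : Q → l) (d : Q → β → Q → l) (final : Q → l) (q : Q)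
    (steps : List (β × Q)) : l :=
  init q ⊓ pathWeight d q steps ⊓ final (pathEnd q steps)

theorem iSup_path_eq_iSup_runWeight (init : Q → l) (d : Q → β → Q → l) (final : Q → l)
    {n : ℕ} (τ : Fin n → β) :
    ⨆ path : Fin (n + 1) → Q,
      init (path 0) ⊓ (⨅ i, d (path i.castSucc) (τ i) (path i.succ)) ⊓ final (path (Fin.last n)) =
      ⨆ (q) (steps : List (β × Q)) (_ : steps.map Prod.fst = List.ofFn τ),
        runWeight init d final q steps := by
  apply le_antisymm
  · refine iSup_le fun path => le_iSup₂_of_le (path 0) (List.ofFn fun i => (τ i, path i.succ)) ?_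
    refine le_iSup_of_le (by simp [List.map_ofFn, Function.comp_def]) ?_
    rw [runWeight, pathWeight_ofFn, pathEnd_ofFn]
  · refine iSup₂_le fun q steps => iSup_le fun h => ?_
    have hlen : steps.length = n := by simpa using congrArg List.length h
    let path : Fin (n + 1) → Q := Fin.cons q fun i => (steps.get (i.cast hlen.symm)).2
    have hsteps : List.ofFn (fun i => (τ i, path i.succ)) = steps := by
      refine List.ext_getElem (by simp [hlen]) fun i h₁ h₂ => ?_
      have hτ := List.getElem_of_eq h (by simpa using h₂)
      simp only [List.getElem_map, List.getElem_ofFn] at hτ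
      ext <;> simp [path, hτ]
    refine le_iSup_of_le path (le_of_eq ?_)
    rw [← pathWeight_ofFn d τ path, ← pathEnd_ofFn τ path, hsteps]
    rfl

end Runs

section Languages

variable {Q A l : Type*} [OrthomodularCompleteLattice l]

theorem lvfaLang_eq_iSup_runWeight (B : LVFA Q A l) (w : List A) :
    lvfaLang B w = ⨆ (q) (steps : List (A × Q)) (_ : steps.map Prod.fst = w),
      runWeight B.init B.δ B.final q steps := by
  rw [lvfaLang, iSup_path_eq_iSup_runWeight, List.ofFn_get]

theorem lvfaeLang_eq_iSup_runWeight (M : LVFAe Q A l) (w : List A) :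
    lvfaeLang M w = ⨆ (q) (steps : List (Option A × Q))
      (_ : (steps.map Prod.fst).reduceOption = w), runWeight M.init M.δ M.final q steps := by
  simp only [lvfaeLang, iSup_path_eq_iSup_runWeight]
  apply le_antisymm
  · refine iSup₂_le fun n τ => iSup_le fun hτ => iSup₂_le fun q steps => iSup_le fun h => ?_
    exact le_iSup₂_of_le q steps (le_iSup_of_le (h ▸ hτ) le_rfl)
  · refine iSup₂_le fun q steps => iSup_le fun h => ?_
    have hofFn := List.ofFn_get (steps.map Prod.fst)
    refine le_iSup₂_of_le _ (steps.map Prod.fst).get (le_iSup_of_le (by rwa [hofFn]) ?_)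
    exact le_iSup₂_of_le q steps (le_iSup_of_le hofFn.symm le_rfl)

end Languages

structure SimplePath (Q : Type*) where
  start : Q
  tail : List Q
  nodup : (start :: tail).Nodup

namespace SimplePath

variable {Q : Type*}

def last (s : SimplePath Q) : Q :=
  s.tail.getLastD s.start

theorem pathEnd_map_prodMk {β : Type*} (b : β) (s : SimplePath Q) :
    pathEnd s.start (s.tail.map (Prod.mk b)) = s.last :=
  _root_.pathEnd_map_prodMk b s.start s.tail

instance [Finite Q] : Finite (SimplePath Q) := by
  classical
  have := Fintype.ofFinite Q
  refine Finite.of_injective (fun s => (⟨s.start :: s.tail, s.nodup⟩ : {r : List Q // r.Nodup}))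
    fun s t h => ?_
  cases s; cases t
  simpa using h

theorem exists_le_pathWeight {β l : Type*} [SemilatticeInf l] [OrderTop l]
    (d : Q → β → Q → l) (b : β) (q : Q) (r : List Q) :
    ∃ s : SimplePath Q, s.start = q ∧ s.last = r.getLastD q ∧
      pathWeight d q (r.map (Prod.mk b)) ≤ pathWeight d q (s.tail.map (Prod.mk b)) := by
  induction r generalizing q with
  | nil => exact ⟨⟨q, [], List.nodup_singleton q⟩, rfl, rfl, le_rfl⟩
  | cons p r ih =>
    obtain ⟨⟨p', r', hnd⟩, hp : p' = p, hlast : r'.getLastD p' = _, hle⟩ := ih p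
    subst p'
    have hstep : pathWeight d q ((p :: r).map (Prod.mk b)) ≤
        pathWeight d q ((p :: r').map (Prod.mk b)) :=
      inf_le_inf_left _ hle
    by_cases hq : q ∈ p :: r'
    · obtain ⟨xs, ys, hsplit⟩ := List.append_of_mem hq
      rw [hsplit] at hnd hstep
      refine ⟨⟨q, ys, hnd.sublist (List.sublist_append_right _ _)⟩, rfl, ?_, ?_⟩
      · calc ys.getLastD q = (xs ++ q :: ys).getLastD q := by simp [List.getLast?_cons]
          _ = (p :: r).getLastD q := by rw [← hsplit, List.getLastD_cons, List.getLastD_cons, hlast]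
      · refine hstep.trans ?_
        rw [List.map_append, pathWeight_append]
        exact inf_le_right.trans inf_le_right
    · refine ⟨⟨q, p :: r', List.nodup_cons.2 ⟨hq, hnd⟩⟩, rfl, ?_, hstep⟩
      rw [last, List.getLastD_cons, List.getLastD_cons, hlast]

end SimplePath

def expandSteps {Q A : Type*} : List (A × SimplePath Q) → List (Option A × Q)
  | [] => []
  | (a, t) :: steps => (some a, t.start) :: (t.tail.map (Prod.mk none) ++ expandSteps steps)

theorem reduceOption_map_fst_expandSteps {Q A : Type*} (steps : List (A × SimplePath Q)) :
    ((expandSteps steps).map Prod.fst).reduceOption = steps.map Prod.fst := by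
  induction steps with
  | nil => rfl
  | cons x steps ih => simp [expandSteps, List.reduceOption_append, ih]

theorem pathEnd_expandSteps {Q A : Type*} (s : SimplePath Q) (steps : List (A × SimplePath Q)) :
    pathEnd s.last (expandSteps steps) = (pathEnd s steps).last := by
  induction steps generalizing s with
  | nil => rfl
  | cons x steps ih =>
    rw [expandSteps, pathEnd, pathEnd_append, SimplePath.pathEnd_map_prodMk, ih]
    rfl

namespace LVFAe

variable {Q A l : Type*}

section SemilatticeInf

variable [SemilatticeInf l] [OrderTop l] (M : LVFAe Q A l)

def epsWeight (q : Q) (r : List Q) : l :=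
  pathWeight M.δ q (r.map (Prod.mk none))

def toLVFA : LVFA (SimplePath Q) A l where
  δ s a t := M.δ s.last (some a) t.start ⊓ M.epsWeight t.start t.tail
  init s := M.init s.start ⊓ M.epsWeight s.start s.tail
  final s := M.final s.last

theorem pathWeight_expandSteps (s : SimplePath Q) (steps : List (A × SimplePath Q)) :
    pathWeight M.δ s.last (expandSteps steps) = pathWeight M.toLVFA.δ s steps := by
  induction steps generalizing s with
  | nil => rfl
  | cons x steps ih =>
    rw [expandSteps, pathWeight, pathWeight_append, SimplePath.pathEnd_map_prodMk, ih, pathWeight,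
      ← inf_assoc]
    rfl

-- `r` is the ε-segment of `M`'s run read since its last letter.
theorem exists_pathWeight_le_toLVFA (steps : List (Option A × Q)) (q : Q) (r : List Q) :
    ∃ (s : SimplePath Q) (steps' : List (A × SimplePath Q)), s.start = q ∧
      steps'.map Prod.fst = (steps.map Prod.fst).reduceOption ∧
      (pathEnd s steps').last = pathEnd q (r.map (Prod.mk none) ++ steps) ∧
      pathWeight M.δ q (r.map (Prod.mk none) ++ steps) ≤
        M.epsWeight s.start s.tail ⊓ pathWeight M.toLVFA.δ s steps' := by
  induction steps generalizing q r with
  | nil =>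
    obtain ⟨s, hs, hlast, hle⟩ := SimplePath.exists_le_pathWeight M.δ none q r
    refine ⟨s, [], hs, rfl, ?_, ?_⟩
    · rw [List.append_nil, pathEnd_map_prodMk]
      exact hlast
    · rw [List.append_nil, hs]
      exact le_inf hle le_top
  | cons x steps ih =>
    obtain ⟨_ | a, p⟩ := x
    · obtain ⟨s, steps', hs, hfst, hlast, hle⟩ := ih q (r ++ [p])
      have hsteps : (r ++ [p]).map (Prod.mk none) ++ steps =
          r.map (Prod.mk none) ++ (none, p) :: steps := by
        simp
      rw [hsteps] at hlast hle
      exact ⟨s, steps', hs, by simpa using hfst, hlast, hle⟩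
    · obtain ⟨t, steps', ht, hfst, hlast, hle⟩ := ih p []
      obtain ⟨s, hs, hslast, hsle⟩ := SimplePath.exists_le_pathWeight M.δ none q r
      refine ⟨s, (a, t) :: steps', hs, by simp [hfst], by simpa [pathEnd_append] using hlast, ?_⟩
      calc pathWeight M.δ q (r.map (Prod.mk none) ++ (some a, p) :: steps)
          = M.epsWeight q r ⊓ (M.δ s.last (some a) t.start ⊓ pathWeight M.δ p steps) := by
            rw [pathWeight_append, pathEnd_map_prodMk, ← hslast, ht]
            rfl
        _ ≤ M.epsWeight s.start s.tail ⊓ (M.δ s.last (some a) t.start ⊓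
              (M.epsWeight t.start t.tail ⊓ pathWeight M.toLVFA.δ t steps')) := by
            rw [hs]
            exact inf_le_inf hsle (inf_le_inf_left _ (by simpa using hle))
        _ = M.epsWeight s.start s.tail ⊓ pathWeight M.toLVFA.δ s ((a, t) :: steps') := by
            simp only [pathWeight, toLVFA, inf_assoc]

end SemilatticeInf

section OrthomodularCompleteLattice

variable [OrthomodularCompleteLattice l] (M : LVFAe Q A l)

theorem lvfaLang_toLVFA_le (w : List A) : lvfaLang M.toLVFA w ≤ lvfaeLang M w := by
  rw [lvfaLang_eq_iSup_runWeight, lvfaeLang_eq_iSup_runWeight]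
  refine iSup₂_le fun s steps => iSup_le fun hw => ?_
  refine le_iSup₂_of_le s.start (s.tail.map (Prod.mk none) ++ expandSteps steps) ?_
  refine le_iSup_of_le (by simp [List.reduceOption_append, reduceOption_map_fst_expandSteps, hw])
    (le_of_eq ?_)
  rw [runWeight, runWeight, pathWeight_append, pathEnd_append, SimplePath.pathEnd_map_prodMk,
    M.pathWeight_expandSteps, pathEnd_expandSteps, ← inf_assoc]
  rfl

theorem lvfaeLang_le_lvfaLang_toLVFA (w : List A) : lvfaeLang M w ≤ lvfaLang M.toLVFA w := by
  rw [lvfaLang_eq_iSup_runWeight, lvfaeLang_eq_iSup_runWeight]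
  refine iSup₂_le fun q steps => iSup_le fun hw => ?_
  obtain ⟨s, steps', rfl, hfst, hlast, hle⟩ := M.exists_pathWeight_le_toLVFA steps q []
  rw [List.map_nil, List.nil_append] at hlast hle
  refine le_iSup₂_of_le s steps' (le_iSup_of_le (hfst.trans hw) ?_)
  calc runWeight M.init M.δ M.final s.start steps
      ≤ M.init s.start ⊓ (M.epsWeight s.start s.tail ⊓ pathWeight M.toLVFA.δ s steps') ⊓
          M.final (pathEnd s steps').last := by
        rw [runWeight, hlast]
        exact inf_le_inf_right _ (inf_le_inf_left _ hle)
    _ = runWeight M.toLVFA.init M.toLVFA.δ M.toLVFA.final s steps' := by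
        rw [runWeight, ← inf_assoc]
        rfl

theorem lvfaLang_toLVFA (w : List A) : lvfaLang M.toLVFA w = lvfaeLang M w :=
  (M.lvfaLang_toLVFA_le w).antisymm (M.lvfaeLang_le_lvfaLang_toLVFA w)

end OrthomodularCompleteLattice

end LVFAe

namespace LVFA

variable {Q P A l : Type*}

def relabel (B : LVFA Q A l) (e : Q ≃ P) : LVFA P A l where
  δ p a p' := B.δ (e.symm p) a (e.symm p')
  init p := B.init (e.symm p)
  final p := B.final (e.symm p)

theorem lvfaLang_relabel [OrthomodularCompleteLattice l] (B : LVFA Q A l) (e : Q ≃ P)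
    (w : List A) : lvfaLang (B.relabel e) w = lvfaLang B w := by
  unfold lvfaLang
  exact ((Equiv.refl _).arrowCongr e.symm).iSup_congr fun path => rfl

end LVFA

theorem lvfae_to_lvfa_general {l Q A : Type*} [OrthomodularCompleteLattice l]
    [Fintype Q] (M : LVFAe Q A l) :
    ∃ (Q' : Type) (_ : Fintype Q') (B : LVFA Q' A l),
      ∀ w : List A, lvfaeLang M w = lvfaLang B w :=
  ⟨_, inferInstance, M.toLVFA.relabel (Finite.equivFin (SimplePath Q)), fun w => by
    rw [LVFA.lvfaLang_relabel, LVFAe.lvfaLang_toLVFA]⟩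

/-- Every `l`-VFA with ε-moves is equivalent to an `l`-VFA without ε-moves. -/
theorem lvfae_to_lvfa {l Q A : Type*} [OrthomodularCompleteLattice l]
    [Fintype Q] [Fintype A] (M : LVFAe Q A l) :
    ∃ (Q' : Type) (_ : Fintype Q') (B : LVFA Q' A l),
      ∀ w : List A, lvfaeLang M w = lvfaLang B w :=
  lvfae_to_lvfa_general M
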